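/- arXiv:2402.04869 — 3 statements merged into one kernel-verified Lean document; each statement's English description precedes it below -/
import Mathlib

section
/- Let S and A be finite nonempty sets, let T : S × A × S → ℝ be a transition kernel, let π and π' be policies, and let P_π and P_{π'} be the induced transition matrices. Then for every function h : S → ℝ with nonnegative values, Σ_{s'∈S} Σ_{s∈S} |P_π(s'|s) − P_{π'}(s'|s)|·h(s) ≤ 2·Σ_{s∈S} h(s)·D_TV(π(·|s), π'(·|s)). -/
/-! Since `T ≥ 0`, the absolute value moves inside the sum over actions, giving
`|P_π(s'|s) - P_π'(s'|s)| ≤ ∑ₐ T(s'|s,a) |π(a|s) - π'(a|s)|`; summing over `s'` first then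
removes `T`, because each `T(·|s,a)` has total mass one. -/

open Finset

theorem abs_sum_mul_sub_sum_mul_le {ι R : Type*} [Fintype ι] [CommRing R] [LinearOrder R]
    [IsStrictOrderedRing R] (w x y : ι → R) (hw : ∀ i, 0 ≤ w i) :
    |∑ i, w i * x i - ∑ i, w i * y i| ≤ ∑ i, w i * |x i - y i| := by
  rw [← sum_sub_distrib]
  refine (abs_sum_le_sum_abs _ _).trans_eq (sum_congr rfl fun i _ => ?_)
  rw [← mul_sub, abs_mul, abs_of_nonneg (hw i)]

theorem sum_sum_sum_mul_of_sum_eq_one {S A R : Type*} [Fintype S] [Fintype A] [CommSemiring R]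
    (T : S → A → S → R) (hT1 : ∀ s a, ∑ s', T s a s' = 1) (f : S → A → R) :
    ∑ s', ∑ s, ∑ a, T s a s' * f s a = ∑ s, ∑ a, f s a := by
  rw [sum_comm]
  refine sum_congr rfl fun s _ => ?_
  rw [sum_comm]
  simp only [← sum_mul, hT1, one_mul]

theorem kernel_difference_bound_general {S A : Type*} [Fintype S] [Fintype A]
    (T : S → A → S → ℝ)
    (hT0 : ∀ s a s', 0 ≤ T s a s')
    (hT1 : ∀ s a, ∑ s', T s a s' = 1)
    (π π' : S → A → ℝ) :
    ∀ h : S → ℝ, (∀ s, 0 ≤ h s) →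
      ∑ s', ∑ s, |(∑ a, T s a s' * π s a) - (∑ a, T s a s' * π' s a)| * h s ≤
        2 * ∑ s, h s * ((1 / 2) * ∑ a, |π s a - π' s a|) := by
  intro h h0
  calc ∑ s', ∑ s, |(∑ a, T s a s' * π s a) - (∑ a, T s a s' * π' s a)| * h s
      ≤ ∑ s', ∑ s, (∑ a, T s a s' * |π s a - π' s a|) * h s := by
        gcongr with s' _ s _
        · exact h0 s
        · exact abs_sum_mul_sub_sum_mul_le _ _ _ fun a => hT0 s a s'
    _ = ∑ s', ∑ s, ∑ a, T s a s' * (|π s a - π' s a| * h s) := by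
        simp only [sum_mul, mul_assoc]
    _ = ∑ s, ∑ a, |π s a - π' s a| * h s := sum_sum_sum_mul_of_sum_eq_one T hT1 _
    _ = 2 * ∑ s, h s * ((1 / 2) * ∑ a, |π s a - π' s a|) := by
        rw [mul_sum]
        refine sum_congr rfl fun s _ => ?_
        rw [← sum_mul]
        ring

/-- For two policies `π, π'` and a transition kernel `T`, with induced transition
matrices `P_π(s'|s) = ∑ₐ T(s'|s,a) π(a|s)`, and any nonnegative `h : S → ℝ`,
`∑_{s'} ∑_s |P_π(s'|s) - P_{π'}(s'|s)| h(s) ≤ 2 ∑_s h(s) D_TV(π(·|s), π'(·|s))`. -/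
theorem kernel_difference_bound {S A : Type*} [Fintype S] [Nonempty S] [Fintype A] [Nonempty A]
    (T : S → A → S → ℝ)
    (hT0 : ∀ s a s', 0 ≤ T s a s')
    (hT1 : ∀ s a, ∑ s', T s a s' = 1)
    (π π' : S → A → ℝ)
    (hπ0 : ∀ s a, 0 ≤ π s a) (hπ1 : ∀ s, ∑ a, π s a = 1)
    (hπ'0 : ∀ s a, 0 ≤ π' s a) (hπ'1 : ∀ s, ∑ a, π' s a = 1) :
    ∀ h : S → ℝ, (∀ s, 0 ≤ h s) →
      ∑ s', ∑ s, |(∑ a, T s a s' * π s a) - (∑ a, T s a s' * π' s a)| * h s ≤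
        2 * ∑ s, h s * ((1 / 2) * ∑ a, |π s a - π' s a|) :=
  kernel_difference_bound_general T hT0 hT1 π π'
end

section
/- Let S and A be finite nonempty sets, let T : S × A × S → ℝ be a transition kernel, let π and π' be policies with induced transition matrices P_π and P_{π'}, let γ ∈ [0,1), and let h₀ be a probability vector on S. Let h_π = (1−γ)·Σ_{t=0}^∞ γ^t P_π^t h₀ and h_{π'} = (1−γ)·Σ_{t=0}^∞ γ^t P_{π'}^t h₀ be the discounted state occupancy distributions. Then D_TV(h_π, h_{π'}) ≤ (1/(1−γ))·Σ_{s∈S} h_{π'}(s)·D_TV(π(·|s), π'(·|s)). -/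
/-! The discounted occupancy is the fixed point of `h = (1 - γ) h₀ + γ P h`. Subtracting the
equations for `π` and `π'` gives `e = γ Pπ e + γ (Pπ - Pπ') hπ'` for `e = hπ - hπ'`. A
column-stochastic matrix does not increase the ℓ¹ norm, so `‖e‖₁ ≤ γ ‖e‖₁ + γ ‖(Pπ - Pπ') hπ'‖₁`,
and the column `s` of `Pπ - Pπ'` has ℓ¹ norm at most `∑ a, |π s a - π' s a|`. -/

open Finset

namespace Matrix

section Abs

variable {R m n : Type*} [Fintype m] [Fintype n] [Ring R] [LinearOrder R] [IsOrderedRing R]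

theorem sum_abs_mulVec_le (M : Matrix m n R) (x : n → R) :
    ∑ i, |(M *ᵥ x) i| ≤ ∑ j, (∑ i, |M i j|) * |x j| :=
  calc ∑ i, |(M *ᵥ x) i| ≤ ∑ i, ∑ j, |M i j| * |x j| :=
        sum_le_sum fun i _ => (abs_sum_le_sum_abs _ _).trans_eq (by simp only [abs_mul])
    _ = ∑ j, (∑ i, |M i j|) * |x j| := by simp only [sum_mul]; exact sum_comm

variable [DecidableEq n]

theorem sum_abs_mulVec_le_of_mem_colStochastic {P : Matrix n n R} (hP : P ∈ colStochastic R n)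
    (x : n → R) : ∑ i, |(P *ᵥ x) i| ≤ ∑ i, |x i| :=
  (sum_abs_mulVec_le P x).trans_eq <| by
    simp [abs_of_nonneg (nonneg_of_mem_colStochastic hP), sum_col_of_mem_colStochastic hP]

end Abs

end Matrix

open Matrix

section Occupancy

variable {S : Type*} [Fintype S] [DecidableEq S]

noncomputable def discountedOccupancy (γ : ℝ) (P : Matrix S S ℝ) (h₀ : S → ℝ) : S → ℝ :=
  fun s => (1 - γ) * ∑' t : ℕ, γ ^ t * (P ^ t *ᵥ h₀) s

variable {γ : ℝ} {P : Matrix S S ℝ}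

theorem discountedOccupancy_nonneg (hP : P ∈ colStochastic ℝ S) (hγ0 : 0 ≤ γ) (hγ1 : γ ≤ 1)
    {h₀ : S → ℝ} (hh₀ : 0 ≤ h₀) : 0 ≤ discountedOccupancy γ P h₀ := fun s =>
  mul_nonneg (sub_nonneg.2 hγ1) <| tsum_nonneg fun t =>
    mul_nonneg (pow_nonneg hγ0 t) (nonneg_mulVec_of_mem_colStochastic (pow_mem hP t) hh₀ s)

theorem summable_pow_smul_pow_mulVec (hP : P ∈ colStochastic ℝ S) (hγ0 : 0 ≤ γ) (hγ1 : γ < 1)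
    (x : S → ℝ) : Summable fun t : ℕ => γ ^ t • (P ^ t *ᵥ x) := by
  refine Summable.of_norm_bounded ((summable_geometric_of_lt_one hγ0 hγ1).mul_right
    (∑ i, |x i|)) fun t => ?_
  rw [norm_smul, norm_pow, Real.norm_of_nonneg hγ0]
  refine mul_le_mul_of_nonneg_left ((pi_norm_le_iff_of_nonneg (by positivity)).2 fun s => ?_)
    (pow_nonneg hγ0 t)
  rw [Real.norm_eq_abs]
  exact (single_le_sum (fun i _ => abs_nonneg ((P ^ t *ᵥ x) i)) (mem_univ s)).trans
    (sum_abs_mulVec_le_of_mem_colStochastic (pow_mem hP t) x)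

theorem discountedOccupancy_eq (hP : P ∈ colStochastic ℝ S) (hγ0 : 0 ≤ γ) (hγ1 : γ < 1)
    (h₀ : S → ℝ) :
    discountedOccupancy γ P h₀ = (1 - γ) • h₀ + γ • P *ᵥ discountedOccupancy γ P h₀ := by
  have hsum := summable_pow_smul_pow_mulVec hP hγ0 hγ1 h₀
  set v := ∑' t : ℕ, γ ^ t • (P ^ t *ᵥ h₀)
  have hocc : discountedOccupancy γ P h₀ = (1 - γ) • v :=
    funext fun s => by simp [discountedOccupancy, v, tsum_apply hsum]
  have hshift : ∀ t : ℕ, γ ^ (t + 1) • (P ^ (t + 1) *ᵥ h₀) = γ • P *ᵥ (γ ^ t • (P ^ t *ᵥ h₀)) :=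
    fun t => by rw [pow_succ', pow_succ', ← mulVec_mulVec, mulVec_smul, smul_smul]
  have hv : v = h₀ + γ • P *ᵥ v := by
    have hshifted : HasSum (fun t : ℕ => γ ^ (t + 1) • (P ^ (t + 1) *ᵥ h₀)) (γ • P *ᵥ v) := by
      simp only [hshift]
      exact (hsum.hasSum.map (mulVecLin P)
        (continuous_const.matrix_mulVec continuous_id)).const_smul γ
    simpa using hsum.hasSum.unique hshifted.zero_add
  rw [hocc, mulVec_smul]
  linear_combination (norm := module) (1 - γ) • hv

theorem sum_abs_sub_discountedOccupancy_le {P' : Matrix S S ℝ} (hP : P ∈ colStochastic ℝ S)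
    (hP' : P' ∈ colStochastic ℝ S) (hγ0 : 0 ≤ γ) (hγ1 : γ < 1) (h₀ : S → ℝ) :
    (1 - γ) * ∑ s, |discountedOccupancy γ P h₀ s - discountedOccupancy γ P' h₀ s| ≤
      γ * ∑ s, (∑ s', |(P - P') s' s|) * |discountedOccupancy γ P' h₀ s| := by
  set h := discountedOccupancy γ P h₀
  set h' := discountedOccupancy γ P' h₀
  have hrec : h - h' = γ • P *ᵥ (h - h') + γ • (P - P') *ᵥ h' := by
    have hfix := discountedOccupancy_eq hP hγ0 hγ1 h₀
    have hfix' := discountedOccupancy_eq hP' hγ0 hγ1 h₀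
    rw [mulVec_sub, sub_mulVec]
    linear_combination (norm := module) hfix - hfix'
  have hcontract : ∑ s, |(h - h') s| ≤ γ * ∑ s, |(h - h') s| + γ * ∑ s, |((P - P') *ᵥ h') s| := by
    calc ∑ s, |(h - h') s|
        ≤ ∑ s, (γ * |(P *ᵥ (h - h')) s| + γ * |((P - P') *ᵥ h') s|) := by
          conv_lhs => rw [hrec]
          refine sum_le_sum fun s _ => (abs_add_le _ _).trans_eq ?_
          simp [abs_mul, abs_of_nonneg hγ0]
      _ ≤ _ := by
          rw [sum_add_distrib, ← mul_sum, ← mul_sum]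
          gcongr γ * ?_ + _
          exact sum_abs_mulVec_le_of_mem_colStochastic hP _
  have hperturb := mul_le_mul_of_nonneg_left (sum_abs_mulVec_le (P - P') h') hγ0
  simp only [Pi.sub_apply] at hcontract
  linarith

end Occupancy

section Policy

variable {S A : Type*} [Fintype S] [Fintype A]

def inducedTransitionMatrix (T : S → A → S → ℝ) (π : S → A → ℝ) : Matrix S S ℝ :=
  of fun s' s => ∑ a, T s a s' * π s a

variable {T : S → A → S → ℝ}

theorem inducedTransitionMatrix_mem_colStochastic [DecidableEq S] (hT0 : ∀ s a s', 0 ≤ T s a s')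
    (hT1 : ∀ s a, ∑ s', T s a s' = 1) {π : S → A → ℝ} (hπ0 : ∀ s a, 0 ≤ π s a)
    (hπ1 : ∀ s, ∑ a, π s a = 1) : inducedTransitionMatrix T π ∈ colStochastic ℝ S := by
  refine mem_colStochastic_iff_sum.2
    ⟨fun s' s => sum_nonneg fun a _ => mul_nonneg (hT0 s a s') (hπ0 s a), fun s => ?_⟩
  simp only [inducedTransitionMatrix, of_apply]
  rw [sum_comm]
  simp [← sum_mul, hT1, hπ1]

theorem sum_abs_inducedTransitionMatrix_sub_le (hT0 : ∀ s a s', 0 ≤ T s a s')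
    (hT1 : ∀ s a, ∑ s', T s a s' = 1) (π π' : S → A → ℝ) (s : S) :
    ∑ s', |(inducedTransitionMatrix T π - inducedTransitionMatrix T π') s' s| ≤
      ∑ a, |π s a - π' s a| := by
  have hcol : ∀ s', (inducedTransitionMatrix T π - inducedTransitionMatrix T π') s' s =
      (of (fun s' a => T s a s') *ᵥ (π s - π' s)) s' := fun s' => by
    simp [inducedTransitionMatrix, mulVec, dotProduct, mul_sub]
  simpa [hcol, abs_of_nonneg (hT0 s _ _), hT1] using
    sum_abs_mulVec_le (of fun s' a => T s a s') (π s - π' s)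

end Policy

theorem state_distribution_discrepancy_general {S A : Type*}
    [Fintype S] [DecidableEq S] [Fintype A]
    (T : S → A → S → ℝ)
    (hT0 : ∀ s a s', 0 ≤ T s a s')
    (hT1 : ∀ s a, ∑ s', T s a s' = 1)
    (π π' : S → A → ℝ)
    (hπ0 : ∀ s a, 0 ≤ π s a) (hπ1 : ∀ s, ∑ a, π s a = 1)
    (hπ'0 : ∀ s a, 0 ≤ π' s a) (hπ'1 : ∀ s, ∑ a, π' s a = 1)
    (Pπ Pπ' : Matrix S S ℝ)
    (hPπ : ∀ s' s, Pπ s' s = ∑ a, T s a s' * π s a)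
    (hPπ' : ∀ s' s, Pπ' s' s = ∑ a, T s a s' * π' s a)
    (γ : ℝ) (hγ : γ ∈ Set.Ico (0 : ℝ) 1)
    (h₀ : S → ℝ) (hh₀0 : ∀ s, 0 ≤ h₀ s)
    (hπocc hπ'occ : S → ℝ)
    (hocc : ∀ s, hπocc s = (1 - γ) * ∑' t : ℕ, γ ^ t * (Pπ ^ t).mulVec h₀ s)
    (hocc' : ∀ s, hπ'occ s = (1 - γ) * ∑' t : ℕ, γ ^ t * (Pπ' ^ t).mulVec h₀ s) :
    (1 / 2) * ∑ s, |hπocc s - hπ'occ s| ≤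
      (1 / (1 - γ)) * ∑ s, hπ'occ s * ((1 / 2) * ∑ a, |π s a - π' s a|) := by
  obtain ⟨hγ0, hγ1⟩ := hγ
  have hP : Pπ ∈ colStochastic ℝ S :=
    Matrix.ext hPπ ▸ inducedTransitionMatrix_mem_colStochastic hT0 hT1 hπ0 hπ1
  have hP' : Pπ' ∈ colStochastic ℝ S :=
    Matrix.ext hPπ' ▸ inducedTransitionMatrix_mem_colStochastic hT0 hT1 hπ'0 hπ'1
  have hcol : ∀ s, ∑ s', |(Pπ - Pπ') s' s| ≤ ∑ a, |π s a - π' s a| := by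
    rw [Matrix.ext hPπ, Matrix.ext hPπ']
    exact sum_abs_inducedTransitionMatrix_sub_le hT0 hT1 π π'
  have hocc_eq : discountedOccupancy γ Pπ h₀ = hπocc := (funext hocc).symm
  have hocc'_eq : discountedOccupancy γ Pπ' h₀ = hπ'occ := (funext hocc').symm
  have hnonneg : 0 ≤ hπ'occ := hocc'_eq ▸ discountedOccupancy_nonneg hP' hγ0 hγ1.le hh₀0
  have hbound : (1 - γ) * ∑ s, |hπocc s - hπ'occ s| ≤
      ∑ s, hπ'occ s * ∑ a, |π s a - π' s a| := calc
    _ ≤ γ * ∑ s, (∑ s', |(Pπ - Pπ') s' s|) * |hπ'occ s| :=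
      hocc_eq ▸ hocc'_eq ▸ sum_abs_sub_discountedOccupancy_le hP hP' hγ0 hγ1 h₀
    _ ≤ ∑ s, (∑ s', |(Pπ - Pπ') s' s|) * |hπ'occ s| :=
      mul_le_of_le_one_left (sum_nonneg fun _ _ => by positivity) hγ1.le
    _ ≤ ∑ s, hπ'occ s * ∑ a, |π s a - π' s a| := sum_le_sum fun s _ => by
      rw [abs_of_nonneg (hnonneg s), mul_comm]
      exact mul_le_mul_of_nonneg_left (hcol s) (hnonneg s)
  calc (1 / 2) * ∑ s, |hπocc s - hπ'occ s|
      ≤ (1 / 2) * ((1 / (1 - γ)) * ∑ s, hπ'occ s * ∑ a, |π s a - π' s a|) := by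
        gcongr
        rw [one_div_mul_eq_div, le_div_iff₀ (sub_pos.2 hγ1), mul_comm]
        exact hbound
    _ = _ := by
        rw [mul_left_comm]
        congr 1
        rw [mul_sum]
        exact sum_congr rfl fun s _ => by ring

/-- **Lemma B2 (state distribution discrepancy).**
For policies `π, π'` with induced transition matrices `Pπ, Pπ'` and discounted state
occupancies `hπ, hπ'` (discount `γ ∈ [0,1)`, initial probability vector `h₀`),
`D_TV(hπ, hπ') ≤ (1/(1-γ)) ∑_s hπ'(s) D_TV(π(·|s), π'(·|s))`. -/
theorem state_distribution_discrepancy {S A : Type*}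
    [Fintype S] [Nonempty S] [DecidableEq S] [Fintype A] [Nonempty A]
    (T : S → A → S → ℝ)
    (hT0 : ∀ s a s', 0 ≤ T s a s')
    (hT1 : ∀ s a, ∑ s', T s a s' = 1)
    (π π' : S → A → ℝ)
    (hπ0 : ∀ s a, 0 ≤ π s a) (hπ1 : ∀ s, ∑ a, π s a = 1)
    (hπ'0 : ∀ s a, 0 ≤ π' s a) (hπ'1 : ∀ s, ∑ a, π' s a = 1)
    (Pπ Pπ' : Matrix S S ℝ)
    (hPπ : ∀ s' s, Pπ s' s = ∑ a, T s a s' * π s a)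
    (hPπ' : ∀ s' s, Pπ' s' s = ∑ a, T s a s' * π' s a)
    (γ : ℝ) (hγ : γ ∈ Set.Ico (0 : ℝ) 1)
    (h₀ : S → ℝ) (hh₀0 : ∀ s, 0 ≤ h₀ s) (hh₀1 : ∑ s, h₀ s = 1)
    (hπocc hπ'occ : S → ℝ)
    (hocc : ∀ s, hπocc s = (1 - γ) * ∑' t : ℕ, γ ^ t * (Pπ ^ t).mulVec h₀ s)
    (hocc' : ∀ s, hπ'occ s = (1 - γ) * ∑' t : ℕ, γ ^ t * (Pπ' ^ t).mulVec h₀ s) :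
    (1 / 2) * ∑ s, |hπocc s - hπ'occ s| ≤
      (1 / (1 - γ)) * ∑ s, hπ'occ s * ((1 / 2) * ∑ a, |π s a - π' s a|) :=
  state_distribution_discrepancy_general T hT0 hT1 π π' hπ0 hπ1 hπ'0 hπ'1 Pπ Pπ' hPπ hPπ' γ hγ h₀
    hh₀0 hπocc hπ'occ hocc hocc'
end

section
/- Let S and A be finite nonempty sets, let h and h' be probability vectors on S, and let π and π' be policies. Then (1/2)·Σ_{s∈S} Σ_{a∈A} |π'(a|s)·h'(s) − π(a|s)·h(s)| ≤ Σ_{s∈S} h(s)·D_TV(π(·|s), π'(·|s)) + D_TV(h, h'). -/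
/-! Split `π' h' - π h = (π' - π) h + π' (h' - h)` pointwise and apply the triangle inequality:
the first term, summed over actions, gives `h(s)` times the policy distance, and the second
sums to `|h(s) - h'(s)|` because `π'(·|s)` is a probability vector. -/

open Finset

lemma abs_mul_sub_mul_le {p p' q q' : ℝ} (hq : 0 ≤ q) (hp' : 0 ≤ p') :
    |p' * q' - p * q| ≤ q * |p - p'| + p' * |q - q'| :=
  calc |p' * q' - p * q| = |(p' - p) * q + p' * (q' - q)| := by ring_nf
    _ ≤ |(p' - p) * q| + |p' * (q' - q)| := abs_add_le _ _
    _ = q * |p - p'| + p' * |q - q'| := by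
      rw [abs_mul, abs_mul, abs_of_nonneg hq, abs_of_nonneg hp', abs_sub_comm p', abs_sub_comm q']
      ring

lemma sum_abs_mul_sub_mul_le {A : Type*} [Fintype A] {p p' : A → ℝ} {q q' : ℝ} (hq : 0 ≤ q)
    (hp'0 : ∀ a, 0 ≤ p' a) (hp'1 : ∑ a, p' a = 1) :
    ∑ a, |p' a * q' - p a * q| ≤ q * ∑ a, |p a - p' a| + |q - q'| :=
  calc ∑ a, |p' a * q' - p a * q| ≤ ∑ a, (q * |p a - p' a| + p' a * |q - q'|) :=
        sum_le_sum fun a _ => abs_mul_sub_mul_le hq (hp'0 a)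
    _ = q * ∑ a, |p a - p' a| + |q - q'| := by
      rw [sum_add_distrib, ← mul_sum, ← sum_mul, hp'1, one_mul]

theorem joint_tv_bound_general {S A : Type*} [Fintype S] [Fintype A]
    (h h' : S → ℝ)
    (hh0 : ∀ s, 0 ≤ h s)
    (π π' : S → A → ℝ)
    (hπ'0 : ∀ s a, 0 ≤ π' s a) (hπ'1 : ∀ s, ∑ a, π' s a = 1) :
    (1 / 2) * ∑ s, ∑ a, |π' s a * h' s - π s a * h s| ≤
      (∑ s, h s * ((1 / 2) * ∑ a, |π s a - π' s a|)) +
        (1 / 2) * ∑ s, |h s - h' s| :=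
  calc (1 / 2) * ∑ s, ∑ a, |π' s a * h' s - π s a * h s|
      ≤ (1 / 2) * ∑ s, (h s * ∑ a, |π s a - π' s a| + |h s - h' s|) := by
        gcongr with s
        exact sum_abs_mul_sub_mul_le (hh0 s) (hπ'0 s) (hπ'1 s)
    _ = (∑ s, h s * ((1 / 2) * ∑ a, |π s a - π' s a|)) + (1 / 2) * ∑ s, |h s - h' s| := by
        rw [sum_add_distrib, mul_add, mul_sum, mul_sum]
        simp only [mul_left_comm]

/-- The total variation distance between the joint distributions `(s,a) ↦ π(a|s) h(s)`
and `(s,a) ↦ π'(a|s) h'(s)` is at most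
`∑_s h(s) D_TV(π(·|s), π'(·|s)) + D_TV(h, h')`. -/
theorem joint_tv_bound {S A : Type*} [Fintype S] [Nonempty S] [Fintype A] [Nonempty A]
    (h h' : S → ℝ)
    (hh0 : ∀ s, 0 ≤ h s) (hh1 : ∑ s, h s = 1)
    (hh'0 : ∀ s, 0 ≤ h' s) (hh'1 : ∑ s, h' s = 1)
    (π π' : S → A → ℝ)
    (hπ0 : ∀ s a, 0 ≤ π s a) (hπ1 : ∀ s, ∑ a, π s a = 1)
    (hπ'0 : ∀ s a, 0 ≤ π' s a) (hπ'1 : ∀ s, ∑ a, π' s a = 1) :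
    (1 / 2) * ∑ s, ∑ a, |π' s a * h' s - π s a * h s| ≤
      (∑ s, h s * ((1 / 2) * ∑ a, |π s a - π' s a|)) +
        (1 / 2) * ∑ s, |h s - h' s| :=
  joint_tv_bound_general h h' hh0 π π' hπ'0 hπ'1
end
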